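/- arXiv:1503.06449 — 5 statements merged into one kernel-verified Lean document; each statement's English description precedes it below -/
import Mathlib

section
/- Let n ∈ {3,4} and V a free ℤ/nℤ-module of rank 2. For a basis (P,Q) of V, let φ_{P,Q} ∈ SL(V) be the map with φ_{P,Q}(P)=P and φ_{P,Q}(Q)=P+Q. Then for any u ∈ GL(V), the image of φ_{u(P),u(Q)} in the abelianization SL(V)^{ab} equals the image of φ_{P,Q}^{det u}. -/
/-!
Write `d = det u` and let `D` be the diagonal automorphism `P ↦ d⁻¹ • P`, `Q ↦ Q`. Then
`s := u ∘ D` has determinant one and conjugates `φ_{P,Q} ^ d` into `φ_{u P, u Q}`, since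
`φ_{P,Q} ^ d` sends `Q` to `d • P + Q` and `s` sends that to `u P + u Q`. Conjugate elements
have the same image in the abelianization.
-/

/-- The special linear group of a module: automorphisms of determinant 1. -/
noncomputable def SLmod (R : Type*) (V : Type*) [CommRing R] [AddCommGroup V] [Module R V] :
    Subgroup (V ≃ₗ[R] V) :=
  (LinearEquiv.det : (V ≃ₗ[R] V) →* Rˣ).ker

namespace Module.Basis

variable {ι R V : Type*} [Fintype ι] [DecidableEq ι] [CommRing R] [AddCommGroup V] [Module R V]

theorem det_equiv_unitsSMul (b : Basis ι R V) (w : ι → Rˣ) :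
    LinearEquiv.det (b.equiv (b.unitsSMul w) (Equiv.refl ι)) = ∏ i, w i := by
  ext
  simp [LinearEquiv.coe_det, det_basis, det_unitsSMul_self]

end Module.Basis

section Transvection

variable {R V : Type*} [CommRing R] [AddCommGroup V] [Module R V]

theorem transvection_pow_apply_left {g : V ≃ₗ[R] V} {P : V} (hgP : g P = P) (k : ℕ) :
    (g ^ k) P = P := by
  induction k with
  | zero => rfl
  | succ k ih => rw [pow_succ, LinearEquiv.mul_apply, hgP, ih]

theorem transvection_pow_apply_right {g : V ≃ₗ[R] V} {P Q : V} (hgP : g P = P)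
    (hgQ : g Q = P + Q) (k : ℕ) : (g ^ k) Q = k • P + Q := by
  induction k with
  | zero => simp
  | succ k ih =>
    rw [pow_succ, LinearEquiv.mul_apply, hgQ, map_add, ih, transvection_pow_apply_left hgP,
      succ_nsmul]
    abel

theorem isConj_transvection_pow (b : Module.Basis (Fin 2) R V)
    (g : V ≃ₗ[R] V) (hgdet : LinearEquiv.det g = 1)
    (hgP : g (b 0) = b 0) (hgQ : g (b 1) = b 0 + b 1)
    (u : V ≃ₗ[R] V) (g' : V ≃ₗ[R] V) (hg'det : LinearEquiv.det g' = 1)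
    (hg'P : g' (u (b 0)) = u (b 0)) (hg'Q : g' (u (b 1)) = u (b 0) + u (b 1))
    {m : ℕ} (hm : (m : R) = LinearEquiv.det u) :
    IsConj ((⟨g, hgdet⟩ : SLmod R V) ^ m) ⟨g', hg'det⟩ := by
  set d := LinearEquiv.det u
  let D := b.equiv (b.unitsSMul ![d⁻¹, 1]) (Equiv.refl _)
  have hD0 : D (b 0) = ((d⁻¹ : Rˣ) : R) • b 0 := by
    simp [D, Module.Basis.equiv_apply, Module.Basis.unitsSMul_apply, Units.smul_def]
  have hD1 : D (b 1) = b 1 := by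
    simp [D, Module.Basis.equiv_apply, Module.Basis.unitsSMul_apply]
  have hsdet : LinearEquiv.det (u * D) = 1 := by
    simp [D, Module.Basis.det_equiv_unitsSMul, d]
  have hdm : m • ((d⁻¹ : Rˣ) : R) • u (b 0) = u (b 0) := by
    rw [← Nat.cast_smul_eq_nsmul R, hm, smul_smul, ← Units.val_mul, mul_inv_cancel,
      Units.val_one, one_smul]
  have hconj : g' * (u * D) = (u * D) * g ^ m := by
    refine b.ext' fun i => ?_
    fin_cases i
    · simp [hD0, transvection_pow_apply_left hgP, map_smul, hg'P]
    · simp [hD0, hD1, transvection_pow_apply_right hgP hgQ, map_smul, hg'Q, hdm]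
  exact isConj_iff.2 ⟨⟨u * D, hsdet⟩, Subtype.ext (mul_inv_eq_of_eq_mul hconj.symm)⟩

end Transvection

/-- Let `n ∈ {3,4}` and `V` a free `ℤ/nℤ`-module of rank 2 (with basis `b`, and
`(P, Q) := (b 0, b 1)`). Let `φ_{P,Q} ∈ SL(V)` be the map with `φ_{P,Q}(P) = P` and
`φ_{P,Q}(Q) = P + Q` (here `g` with `det g = 1`, `g P = P`, `g Q = P + Q`). Then for any
`u ∈ GL(V)`, the image in `SL(V)^{ab}` of `φ_{u(P),u(Q)}` (here `g'` with `det g' = 1`,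
`g' (u P) = u P`, `g' (u Q) = u P + u Q`) equals the image of `φ_{P,Q} ^ (det u)`. -/
theorem stmt_6 (n : ℕ) (hn : n = 3 ∨ n = 4) (V : Type*) [AddCommGroup V]
    [Module (ZMod n) V] (b : Module.Basis (Fin 2) (ZMod n) V)
    (P Q : V) (hP : P = b 0) (hQ : Q = b 1)
    (g : V ≃ₗ[ZMod n] V) (hgdet : LinearEquiv.det g = 1)
    (hgP : g P = P) (hgQ : g Q = P + Q)
    (u : V ≃ₗ[ZMod n] V)
    (g' : V ≃ₗ[ZMod n] V) (hg'det : LinearEquiv.det g' = 1)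
    (hg'P : g' (u P) = u P) (hg'Q : g' (u Q) = u P + u Q) :
    Abelianization.of (⟨g', hg'det⟩ : SLmod (ZMod n) V) =
      Abelianization.of ((⟨g, hgdet⟩ : SLmod (ZMod n) V) ^
        ((LinearEquiv.det u : (ZMod n)ˣ) : ZMod n).val) := by
  subst hP hQ
  have : NeZero n := ⟨by rcases hn with rfl | rfl <;> decide⟩
  have hconj := isConj_transvection_pow b g hgdet hgP hgQ u g' hg'det hg'P hg'Q
    (ZMod.natCast_zmod_val _)
  exact (isConj_iff_eq.1 (Abelianization.of.map_isConj hconj)).symm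
end

section
/- Let n ∈ {3,4} and V a free ℤ/nℤ-module of rank 2. There exists a unique surjective group homomorphism φ: Λ²V → SL(V)^{ab} such that for every basis (P,Q) of V, φ(P∧Q) is the class of the transvection φ_{P,Q} (defined by P ↦ P, Q ↦ P+Q) in SL(V)^{ab}. -/
/-- The wedge product `P ∧ Q` as an element of the second exterior power `⋀[R]^2 V`. -/
def wedge (R : Type*) {V : Type*} [CommRing R] [AddCommGroup V] [Module R V] (P Q : V) :
    ⋀[R]^2 V :=
  ⟨ExteriorAlgebra.ιMulti R 2 ![P, Q],
    ExteriorAlgebra.ιMulti_range R 2 ⟨![P, Q], rfl⟩⟩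

set_option linter.unusedSectionVars false
namespace Stmt7

open ExteriorAlgebra Matrix

variable {R : Type*} [CommRing R] {V : Type*} [AddCommGroup V] [Module R V]

/-- Conjugation of automorphism groups by a linear equivalence. -/
def conjHom {W : Type*} [AddCommGroup W] [Module R W] (e : V ≃ₗ[R] W) :
    (V ≃ₗ[R] V) →* (W ≃ₗ[R] W) where
  toFun f := (e.symm.trans f).trans e
  map_one' := by ext w; simp
  map_mul' f g := by
    ext w
    show e ((f * g) (e.symm w)) = e (f (e.symm (e (g (e.symm w)))))
    rw [LinearEquiv.symm_apply_apply]
    rfl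

lemma conjHom_apply {W : Type*} [AddCommGroup W] [Module R W] (e : V ≃ₗ[R] W)
    (f : V ≃ₗ[R] V) (w : W) : conjHom e f w = e (f (e.symm w)) := rfl

lemma conjHom_det {W : Type*} [AddCommGroup W] [Module R W] (e : V ≃ₗ[R] W)
    (f : V ≃ₗ[R] V) : LinearEquiv.det (conjHom e f) = LinearEquiv.det f :=
  LinearEquiv.det_conj f e

/-- Conjugation inside `SLmod`. -/
def conjSL (D : V ≃ₗ[R] V) : SLmod R V →* SLmod R V where
  toFun x := ⟨D * x.1 * D⁻¹, by
    have hx : LinearEquiv.det x.1 = 1 := x.2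
    show LinearEquiv.det _ = 1
    rw [_root_.map_mul, _root_.map_mul, hx, map_inv]
    group⟩
  map_one' := by ext : 1; simp [mul_assoc]
  map_mul' x y := by
    ext : 1
    show D * (x.1 * y.1) * D⁻¹ = (D * x.1 * D⁻¹) * (D * y.1 * D⁻¹)
    group

lemma conjSL_coe (D : V ≃ₗ[R] V) (x : SLmod R V) : (conjSL D x).1 = D * x.1 * D⁻¹ := rfl

variable (b : Module.Basis (Fin 2) R V)

/-- The group hom from `SL(2,R)` to `SLmod R V` induced by a basis. -/
noncomputable def Psi : Matrix.SpecialLinearGroup (Fin 2) R →* SLmod R V :=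
  ((conjHom b.equivFun.symm).comp Matrix.SpecialLinearGroup.toLin').codRestrict (SLmod R V)
    (fun A => by
      show LinearEquiv.det _ = 1
      rw [MonoidHom.comp_apply, conjHom_det]
      ext
      rw [LinearEquiv.coe_det, Matrix.SpecialLinearGroup.toLin'_to_linearMap,
        LinearMap.det_toLin']
      exact A.2)

lemma Psi_coe (A : Matrix.SpecialLinearGroup (Fin 2) R) :
    ((Psi b A).1 : V ≃ₗ[R] V) = conjHom b.equivFun.symm (Matrix.SpecialLinearGroup.toLin' A) :=
  rfl

lemma Psi_apply_basis (A : Matrix.SpecialLinearGroup (Fin 2) R) (j : Fin 2) :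
    (Psi b A).1 (b j) = A.1 0 j • b 0 + A.1 1 j • b 1 := by
  rw [Psi_coe, conjHom_apply]
  simp only [LinearEquiv.symm_symm]
  rw [Matrix.SpecialLinearGroup.toLin'_apply]
  have h1 : b.equivFun (b j) = fun i => if j = i then (1:R) else 0 := by
    funext i
    simp [Module.Basis.equivFun_apply, Finsupp.single_apply]
  rw [h1]
  rw [Module.Basis.equivFun_symm_apply]
  rw [Fin.sum_univ_two]
  fin_cases j <;> simp [Matrix.mulVec, dotProduct, Fin.sum_univ_two]

lemma Psi_surjective : Function.Surjective (Psi b) := by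
  intro g
  have hdet : LinearEquiv.det g.1 = 1 := g.2
  set f := conjHom b.equivFun g.1 with hf
  have hfdet : (LinearMap.toMatrix' f.toLinearMap).det = 1 := by
    rw [LinearMap.det_toMatrix']
    have : LinearMap.det f.toLinearMap = (LinearEquiv.det f : R) := (LinearEquiv.coe_det f).symm
    rw [this, conjHom_det, hdet, Units.val_one]
  refine ⟨(⟨LinearMap.toMatrix' f.toLinearMap, hfdet⟩ : Matrix.SpecialLinearGroup (Fin 2) R), ?_⟩
  apply Subtype.ext
  show conjHom b.equivFun.symm (Matrix.SpecialLinearGroup.toLin'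
    (⟨LinearMap.toMatrix' f.toLinearMap, hfdet⟩ : Matrix.SpecialLinearGroup (Fin 2) R)) = g.1
  have htl : Matrix.SpecialLinearGroup.toLin'
      (⟨LinearMap.toMatrix' f.toLinearMap, hfdet⟩ : Matrix.SpecialLinearGroup (Fin 2) R) = f := by
    apply LinearEquiv.toLinearMap_injective
    refine (Matrix.SpecialLinearGroup.toLin'_to_linearMap _).trans ?_
    exact Matrix.toLin'_toMatrix' f.toLinearMap
  rw [htl]
  apply LinearEquiv.toLinearMap_injective
  apply LinearMap.ext
  intro x
  show b.equivFun.symm (f (b.equivFun x)) = g.1 x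
  rw [hf, conjHom_apply, LinearEquiv.symm_apply_apply, LinearEquiv.symm_apply_apply]


section Mats
variable (R : Type*) [CommRing R]

def mkE (x : R) : Matrix.SpecialLinearGroup (Fin 2) R :=
  ⟨!![1, x; 0, 1], by simp [Matrix.det_fin_two_of]⟩

def mkE' (x : R) : Matrix.SpecialLinearGroup (Fin 2) R :=
  ⟨!![1, 0; x, 1], by simp [Matrix.det_fin_two_of]⟩

variable {R}

lemma mkE_pow (k : ℕ) : mkE R 1 ^ k = mkE R (k : R) := by
  induction k with
  | zero => rw [pow_zero]; ext i j; fin_cases i <;> fin_cases j <;> simp [mkE]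
  | succ m ih =>
    rw [pow_succ, ih]
    ext i j
    have : ((mkE R (m:R) * mkE R 1 : Matrix.SpecialLinearGroup (Fin 2) R) : Matrix (Fin 2) (Fin 2) R)
        = !![1, (m:R); 0, 1] * !![1, 1; 0, 1] := rfl
    rw [this]
    fin_cases i <;> fin_cases j <;>
      simp [this, mkE, Matrix.mul_fin_two, Nat.cast_succ, add_comm]

lemma mkE'_pow (k : ℕ) : mkE' R 1 ^ k = mkE' R (k : R) := by
  induction k with
  | zero => rw [pow_zero]; ext i j; fin_cases i <;> fin_cases j <;> simp [mkE']
  | succ m ih =>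
    rw [pow_succ, ih]
    ext i j
    have : ((mkE' R (m:R) * mkE' R 1 : Matrix.SpecialLinearGroup (Fin 2) R) : Matrix (Fin 2) (Fin 2) R)
        = !![1, 0; (m:R), 1] * !![1, 0; 1, 1] := rfl
    rw [this]
    fin_cases i <;> fin_cases j <;>
      simp [this, mkE', Matrix.mul_fin_two, Nat.cast_succ, add_comm]

end Mats

section Gen

variable {n : ℕ} [NeZero n]

/-- The subgroup generated by the two elementary matrices. -/
def H (n : ℕ) : Subgroup (Matrix.SpecialLinearGroup (Fin 2) (ZMod n)) :=
  Subgroup.closure {mkE (ZMod n) 1, mkE' (ZMod n) 1}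

lemma mkE_mem (x : ZMod n) : mkE (ZMod n) x ∈ H n := by
  have : mkE (ZMod n) x = mkE (ZMod n) 1 ^ x.val := by
    rw [mkE_pow, ZMod.natCast_rightInverse x]
  rw [this]
  exact pow_mem (Subgroup.subset_closure (by simp)) _

lemma mkE'_mem (x : ZMod n) : mkE' (ZMod n) x ∈ H n := by
  have : mkE' (ZMod n) x = mkE' (ZMod n) 1 ^ x.val := by
    rw [mkE'_pow, ZMod.natCast_rightInverse x]
  rw [this]
  exact pow_mem (Subgroup.subset_closure (by simp)) _

lemma case1 (A : Matrix.SpecialLinearGroup (Fin 2) (ZMod n)) (x : ZMod n)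
    (hx : A.1 1 0 * x = 1) : A ∈ H n := by
  set a := A.1 0 0
  set bb := A.1 0 1
  set c := A.1 1 0
  set d := A.1 1 1
  have hdet : a * d - bb * c = 1 := by
    have := A.2
    rwa [Matrix.det_fin_two] at this
  have hA : A = mkE (ZMod n) ((a - 1) * x) * mkE' (ZMod n) c * mkE (ZMod n) ((d - 1) * x) := by
    ext i j
    have hco : ((mkE (ZMod n) ((a - 1) * x) * mkE' (ZMod n) c * mkE (ZMod n) ((d - 1) * x) :
        Matrix.SpecialLinearGroup (Fin 2) (ZMod n)) : Matrix (Fin 2) (Fin 2) (ZMod n))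
        = !![1, (a-1)*x; 0, 1] * !![1, 0; c, 1] * !![1, (d-1)*x; 0, 1] := rfl
    have hAe : (A : Matrix (Fin 2) (Fin 2) (ZMod n)) = !![a, bb; c, d] := by
      rw [Matrix.eta_fin_two A.1]
    have hb : bb = (a * d - 1) * x := by linear_combination (-bb) * hx - x * hdet
    fin_cases i <;> fin_cases j <;>
      simp [hco, hAe, Matrix.mul_fin_two]
    · linear_combination (1 - a) * hx
    · linear_combination hb - (a-1)*(d-1)*x*hx
    · linear_combination (1 - d) * hx
  rw [hA]
  exact mul_mem (mul_mem (mkE_mem _) (mkE'_mem _)) (mkE_mem _)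

lemma dichotomy {n : ℕ} (hn : n = 3 ∨ n = 4) (a bb c d : ZMod n) (h : a * d - bb * c = 1) :
    (∃ x, c * x = 1) ∨ (∃ x, (c + a) * x = 1) := by
  rcases hn with rfl | rfl <;> revert h <;> revert a bb c d <;> decide

lemma gen_eq_top {n : ℕ} [NeZero n] (hn : n = 3 ∨ n = 4)
    (A : Matrix.SpecialLinearGroup (Fin 2) (ZMod n)) : A ∈ H n := by
  have hdet : A.1 0 0 * A.1 1 1 - A.1 0 1 * A.1 1 0 = 1 := by
    have := A.2
    rwa [Matrix.det_fin_two] at this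
  rcases dichotomy hn _ _ _ _ hdet with ⟨x, hx⟩ | ⟨x, hx⟩
  · exact case1 A x hx
  · have hmem : mkE' (ZMod n) 1 * A ∈ H n := by
      apply case1 _ x
      have : ((mkE' (ZMod n) 1 * A : Matrix.SpecialLinearGroup (Fin 2) (ZMod n)) :
          Matrix (Fin 2) (Fin 2) (ZMod n)) 1 0 = A.1 0 0 + A.1 1 0 := by
        rw [Matrix.SpecialLinearGroup.coe_mul]
        rw [Matrix.eta_fin_two A.1]
        simp [mkE', Matrix.mul_fin_two]
      rw [this]
      rw [add_comm] at hx
      exact hx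
    have := mul_mem (inv_mem (mkE'_mem (1 : ZMod n))) hmem
    rwa [inv_mul_cancel_left] at this

end Gen


lemma iMulti_two (v : Fin 2 → V) :
    ιMulti R 2 v = ι R (v 0) * ι R (v 1) := by
  rw [ιMulti_succ_apply, ιMulti_succ_apply, ιMulti_zero_apply, mul_one]
  rfl

/-- The coordinate functional on the exterior algebra given by `b.det` in degree 2. -/
noncomputable def Th (b : Module.Basis (Fin 2) R V) : ExteriorAlgebra R V →ₗ[R] R :=
  ExteriorAlgebra.liftAlternating (Function.update (fun _ => 0) 2 b.det)

lemma Th_iMulti (b : Module.Basis (Fin 2) R V) (v : Fin 2 → V) :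
    Th b (ιMulti R 2 v) = b.det v := by
  rw [Th, liftAlternating_apply_ιMulti]
  simp


lemma det_two (P Q : V) :
    b.det ![P, Q] = b.repr P 0 * b.repr Q 1 - b.repr Q 0 * b.repr P 1 := by
  rw [Module.Basis.det_apply, Matrix.det_fin_two]
  simp [Module.Basis.toMatrix_apply]

lemma iota_expand (P Q : V) :
    ι R P * ι R Q = b.det ![P, Q] • (ι R (b 0) * ι R (b 1)) := by
  have hP : P = b.repr P 0 • b 0 + b.repr P 1 • b 1 := by
    conv_lhs => rw [← b.sum_repr P]
    rw [Fin.sum_univ_two]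
  have hQ : Q = b.repr Q 0 • b 0 + b.repr Q 1 • b 1 := by
    conv_lhs => rw [← b.sum_repr Q]
    rw [Fin.sum_univ_two]
  have hyx : ι R (b 1) * ι R (b 0) = -(ι R (b 0) * ι R (b 1)) :=
    eq_neg_of_add_eq_zero_right (by rw [add_comm]; exact ι_add_mul_swap _ _)
  rw [det_two]
  conv_lhs => rw [hP, hQ]
  simp only [map_add, _root_.map_smul, add_mul, mul_add, smul_mul_assoc, mul_smul_comm,
    ι_sq_zero, hyx, smul_smul, smul_zero, zero_add, add_zero, smul_neg, sub_smul]
  rw [mul_comm (b.repr Q 1) (b.repr P 0)]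
  abel

lemma wedge_expand (P Q : V) :
    wedge R P Q = b.det ![P, Q] • wedge R (b 0) (b 1) := by
  apply Subtype.ext
  show ιMulti R 2 ![P, Q] = b.det ![P, Q] • (ιMulti R 2 ![b 0, b 1] : ExteriorAlgebra R V)
  rw [iMulti_two, iMulti_two]
  simpa using iota_expand b P Q

lemma Th_wedge (P Q : V) : Th b (wedge R P Q).1 = b.det ![P, Q] := by
  show Th b (ιMulti R 2 ![P, Q]) = _
  rw [Th_iMulti]

lemma vec_b : ![b 0, b 1] = ⇑b := by
  funext i
  fin_cases i <;> simp

lemma det_b_self : b.det ![b 0, b 1] = 1 := by rw [vec_b, Module.Basis.det_self]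

lemma eq_smul_of_mem (y : ExteriorAlgebra R V)
    (hy : y ∈ Submodule.span R (Set.range (ιMulti R 2 (M := V)))) :
    y = Th b y • (ιMulti R 2 ![b 0, b 1] : ExteriorAlgebra R V) := by
  induction hy using Submodule.span_induction with
  | mem z hz =>
    obtain ⟨v, rfl⟩ := hz
    rw [Th_iMulti]
    have hv : v = ![v 0, v 1] := by funext i; fin_cases i <;> simp
    rw [hv, iMulti_two, iMulti_two, iota_expand b]
    simp
  | zero => simp
  | add y z hy hz ihy ihz => rw [map_add, add_smul, ← ihy, ← ihz]
  | smul r y hy ihy => rw [_root_.map_smul, smul_eq_mul, mul_smul, ← ihy]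

lemma eq_smul_wedge (x : ⋀[R]^2 V) :
    x = Th b x.1 • wedge R (b 0) (b 1) := by
  apply Subtype.ext
  show (x : ExteriorAlgebra R V) = Th b x.1 • (wedge R (b 0) (b 1)).1
  have hx : (x : ExteriorAlgebra R V) ∈
      Submodule.span R (Set.range (ιMulti R 2 (M := V))) := by
    rw [ιMulti_span_fixedDegree]; exact x.2
  have h := eq_smul_of_mem b _ hx
  conv_lhs => rw [h]
  congr 1


section Core

variable {n : ℕ} [NeZero n] {V : Type*} [AddCommGroup V]
    [Module (ZMod n) V] (b : Module.Basis (Fin 2) (ZMod n) V)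

local notation "RR" => ZMod n

lemma t_pow_apply (k : ℕ) (j : Fin 2) :
    ((Psi b (mkE RR 1) ^ k).1 : V ≃ₗ[RR] V) (b j) =
      (mkE RR ((k : RR))).1 0 j • b 0 + (mkE RR ((k : RR))).1 1 j • b 1 := by
  rw [← map_pow, mkE_pow, Psi_apply_basis]

lemma t_apply_b0 : ((Psi b (mkE RR 1)).1 : V ≃ₗ[RR] V) (b 0) = b 0 := by
  rw [Psi_apply_basis]
  simp [mkE]

lemma t_apply_b1 : ((Psi b (mkE RR 1)).1 : V ≃ₗ[RR] V) (b 1) = b 0 + b 1 := by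
  rw [Psi_apply_basis]
  simp [mkE]

lemma t'_apply_b0 : ((Psi b (mkE' RR 1)).1 : V ≃ₗ[RR] V) (b 0) = b 0 + b 1 := by
  rw [Psi_apply_basis]
  simp [mkE']

lemma t'_apply_b1 : ((Psi b (mkE' RR 1)).1 : V ≃ₗ[RR] V) (b 1) = b 1 := by
  rw [Psi_apply_basis]
  simp [mkE']

/-- The class of a transvection in the abelianization, as a power of the standard one. -/
lemma classEq (c : Module.Basis (Fin 2) RR V) (g : V ≃ₗ[RR] V)
    (hg : LinearEquiv.det g = 1)
    (h0 : g (c 0) = c 0) (h1 : g (c 1) = c 0 + c 1) :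
    Abelianization.of (⟨g, MonoidHom.mem_ker.mpr hg⟩ : SLmod RR V) =
      Abelianization.of (Psi b (mkE RR 1)) ^
        ((LinearEquiv.det (b.equiv c (Equiv.refl _)) : RRˣ) : RR).val := by
  set t := Psi b (mkE RR 1) with ht
  set A := b.equiv c (Equiv.refl _) with hAdef
  have hA : ∀ i, A (b i) = c i := fun i => b.equiv_apply i c _
  set u := LinearEquiv.det A with hu
  set k := ((u : RR)).val with hk
  have hcast : ((k : ℕ) : RR) = (u : RR) := ZMod.natCast_rightInverse _
  -- g * A = A * t
  have hmul : g * (A : V ≃ₗ[RR] V) = A * t.1 := by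
    apply LinearEquiv.toLinearMap_injective
    apply b.ext
    intro i
    fin_cases i
    · show g (A (b 0)) = A (t.1 (b 0))
      rw [ht, t_apply_b0, hA]
      exact h0
    · show g (A (b 1)) = A (t.1 (b 1))
      rw [ht, t_apply_b1, map_add, hA, hA]
      exact h1
  have hg_eq : g = A * t.1 * (A : V ≃ₗ[RR] V)⁻¹ := by
    rw [← hmul]
    group
  -- the diagonal map D
  set D := b.equiv (b.unitsSMul ![u, 1]) (Equiv.refl _) with hDdef
  have hD0 : D (b 0) = u • b 0 := by
    rw [hDdef, b.equiv_apply]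
    simp [Module.Basis.unitsSMul_apply]
  have hD1 : D (b 1) = b 1 := by
    rw [hDdef, b.equiv_apply]
    simp [Module.Basis.unitsSMul_apply]
  have hdetD : LinearEquiv.det D = u := by
    apply Units.ext
    rw [LinearEquiv.coe_det, ← LinearMap.det_toMatrix b]
    have hm : LinearMap.toMatrix b b (D : V →ₗ[RR] V) = !![(u : RR), 0; 0, 1] := by
      ext i j
      rw [LinearMap.toMatrix_apply]
      fin_cases i <;> fin_cases j <;>
        simp [hD0, hD1, Units.smul_def, Finsupp.single_apply]
    rw [hm, Matrix.det_fin_two_of]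
    ring
  set s := (D : V ≃ₗ[RR] V)⁻¹ * A with hsdef
  have hdets : s ∈ SLmod RR V := by
    show LinearEquiv.det s = 1
    rw [hsdef, _root_.map_mul, map_inv, hdetD, ← hu, inv_mul_cancel]
  set σ : SLmod RR V := ⟨s, hdets⟩ with hσ
  have hAD : (A : V ≃ₗ[RR] V) = D * s := by
    rw [hsdef, mul_inv_cancel_left]
  -- identify the subtype element with a conjugate
  have hsub : (⟨g, MonoidHom.mem_ker.mpr hg⟩ : SLmod RR V) = conjSL D (σ * t * σ⁻¹) := by
    apply Subtype.ext
    rw [conjSL_coe]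
    show g = D * ((σ * t * σ⁻¹ : SLmod RR V) : V ≃ₗ[RR] V) * D⁻¹
    have : ((σ * t * σ⁻¹ : SLmod RR V) : V ≃ₗ[RR] V) = s * t.1 * s⁻¹ := by
      simp [hσ]
    rw [this, hg_eq, hAD]
    group
  -- conjugation by D sends t to t ^ k
  have hDt : conjSL (D : V ≃ₗ[RR] V) t = t ^ k := by
    apply Subtype.ext
    rw [conjSL_coe]
    have hpow : (D : V ≃ₗ[RR] V) * t.1 = ((t ^ k : SLmod RR V) : V ≃ₗ[RR] V) * D := by
      apply LinearEquiv.toLinearMap_injective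
      apply b.ext
      intro i
      fin_cases i
      · show D (t.1 (b 0)) = ((t ^ k : SLmod RR V) : V ≃ₗ[RR] V) (D (b 0))
        rw [ht, t_apply_b0, hD0, Units.smul_def, _root_.map_smul, t_pow_apply b k 0]
        simp [mkE]
      · show D (t.1 (b 1)) = ((t ^ k : SLmod RR V) : V ≃ₗ[RR] V) (D (b 1))
        rw [ht, t_apply_b1, map_add, hD0, hD1, t_pow_apply b k 1]
        simp [mkE, hcast, Units.smul_def]
    rw [hpow, mul_inv_cancel_right]
  -- now compute in the abelianization
  rw [hsub]
  have h1 : Abelianization.of (conjSL (D : V ≃ₗ[RR] V) (σ * t * σ⁻¹)) =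
      Abelianization.map (conjSL (D : V ≃ₗ[RR] V)) (Abelianization.of (σ * t * σ⁻¹)) := by
    rw [Abelianization.map_of]
  have h2 : Abelianization.of (σ * t * σ⁻¹) = Abelianization.of t := by
    rw [_root_.map_mul, _root_.map_mul, map_inv, mul_comm (Abelianization.of σ) (Abelianization.of t),
      mul_inv_cancel_right]
  rw [h1, h2, Abelianization.map_of, hDt, map_pow]

lemma det_c (c : Module.Basis (Fin 2) RR V) :
    b.det ![c 0, c 1] = ((LinearEquiv.det (b.equiv c (Equiv.refl _)) : RRˣ) : RR) := by
  have hv : ![c 0, c 1] = ⇑((b.equiv c (Equiv.refl _)) : V →ₗ[RR] V) ∘ ⇑b := by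
    funext i
    fin_cases i <;> simp [b.equiv_apply]
  rw [hv, Module.Basis.det_comp, Module.Basis.det_self, mul_one, ← LinearEquiv.coe_det]

end Core

end Stmt7

open Stmt7 ExteriorAlgebra in
/-- Let `n ∈ {3,4}` and `V` a free `ℤ/nℤ`-module of rank 2. There exists a unique
surjective group homomorphism `φ : Λ²V → SL(V)^{ab}` such that for every basis `(P,Q)`
of `V`, `φ(P ∧ Q)` is the class in `SL(V)^{ab}` of the transvection `φ_{P,Q}` (defined by
`P ↦ P`, `Q ↦ P + Q`). -/
theorem stmt_7 (n : ℕ) (hn : n = 3 ∨ n = 4) (V : Type*) [AddCommGroup V]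
    [Module (ZMod n) V] (b : Module.Basis (Fin 2) (ZMod n) V) :
    ∃! φ : (⋀[ZMod n]^2 V) →+ Additive (Abelianization (SLmod (ZMod n) V)),
      Function.Surjective φ ∧
      ∀ (c : Module.Basis (Fin 2) (ZMod n) V) (g : V ≃ₗ[ZMod n] V)
        (hgdet : LinearEquiv.det g = 1),
        g (c 0) = c 0 → g (c 1) = c 0 + c 1 →
        φ (wedge (ZMod n) (c 0) (c 1)) =
          Additive.ofMul (Abelianization.of (⟨g, hgdet⟩ : SLmod (ZMod n) V)) := by
  haveI : NeZero n := ⟨by rcases hn with rfl | rfl <;> simp⟩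
  haveI : Fact (1 < n) := ⟨by rcases hn with rfl | rfl <;> omega⟩
  set t := Psi b (mkE (ZMod n) 1) with ht
  set a : Additive (Abelianization (SLmod (ZMod n) V)) :=
    Additive.ofMul (Abelianization.of t) with ha
  have htn : t ^ n = 1 := by
    rw [ht, ← map_pow, mkE_pow, ZMod.natCast_self]
    have h1 : mkE (ZMod n) 0 = 1 := by
      ext i j
      fin_cases i <;> fin_cases j <;> simp [mkE]
    rw [h1, map_one]
  have hna : (zmultiplesHom _ a) (n : ℤ) = 0 := by
    simp only [zmultiplesHom_apply]
    rw [natCast_zsmul, ha, ← ofMul_pow, ← map_pow, htn, map_one, ofMul_one]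
  set ψ : ZMod n →+ Additive (Abelianization (SLmod (ZMod n) V)) :=
    ZMod.lift n ⟨zmultiplesHom _ a, hna⟩ with hψdef
  have hψ : ∀ x : ZMod n, ψ x = x.val • a := by
    intro x
    have h1 : (((x.val : ℤ) : ZMod n)) = x := by
      push_cast
      exact ZMod.natCast_rightInverse x
    calc ψ x = ψ (((x.val : ℤ) : ZMod n)) := by rw [h1]
    _ = (x.val : ℤ) • a := by rw [hψdef, ZMod.lift_coe]; simp
    _ = x.val • a := natCast_zsmul _ _
  set θ : (⋀[ZMod n]^2 V) →ₗ[ZMod n] ZMod n := (Th b).comp (Submodule.subtype _) with hθ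
  set φ : (⋀[ZMod n]^2 V) →+ Additive (Abelianization (SLmod (ZMod n) V)) :=
    ψ.comp θ.toAddMonoidHom with hφdef
  have hφ : ∀ x, φ x = ψ (Th b x.1) := fun x => rfl
  -- the characteristic property
  have hprop : ∀ (c : Module.Basis (Fin 2) (ZMod n) V) (g : V ≃ₗ[ZMod n] V)
      (hgdet : LinearEquiv.det g = 1), g (c 0) = c 0 → g (c 1) = c 0 + c 1 →
      φ (wedge (ZMod n) (c 0) (c 1)) =
        Additive.ofMul (Abelianization.of (⟨g, hgdet⟩ : SLmod (ZMod n) V)) := by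
    intro c g hgdet h0 h1
    rw [hφ, Th_wedge, det_c b c, hψ]
    have hcls := classEq b c g hgdet h0 h1
    have heq : (⟨g, hgdet⟩ : SLmod (ZMod n) V) = ⟨g, MonoidHom.mem_ker.mpr hgdet⟩ := rfl
    rw [heq, hcls, ofMul_pow, ha, ht]
  -- range facts
  have hψrange : ∀ x : ZMod n, ψ x ∈ φ.range := by
    intro x
    refine ⟨x • wedge (ZMod n) (b 0) (b 1), ?_⟩
    rw [hφ]
    have hc : ((x • wedge (ZMod n) (b 0) (b 1) : ⋀[ZMod n]^2 V) : ExteriorAlgebra (ZMod n) V)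
        = x • ((wedge (ZMod n) (b 0) (b 1) : ⋀[ZMod n]^2 V) : ExteriorAlgebra (ZMod n) V) := rfl
    rw [hc, _root_.map_smul, Th_wedge, det_b_self, smul_eq_mul, mul_one]
  have hofmem : ∀ h : SLmod (ZMod n) V,
      Additive.ofMul (Abelianization.of h) ∈ φ.range := by
    intro h
    obtain ⟨A, rfl⟩ := Psi_surjective b h
    have hA : A ∈ H n := gen_eq_top hn A
    induction hA using Subgroup.closure_induction with
    | mem x hx =>
      rw [Set.mem_insert_iff, Set.mem_singleton_iff] at hx
      rcases hx with rfl | rfl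
      · have h0 := t_apply_b0 b
        have h1 := t_apply_b1 b
        have hdet : LinearEquiv.det ((Psi b (mkE (ZMod n) 1)).1 : V ≃ₗ[ZMod n] V) = 1 :=
          (Psi b (mkE (ZMod n) 1)).2
        have hp := hprop b (Psi b (mkE (ZMod n) 1)).1 hdet h0 h1
        exact ⟨wedge (ZMod n) (b 0) (b 1), hp.symm ▸ rfl⟩
      · set c' := b.reindex (Equiv.swap 0 1) with hc'
        have hc'0 : c' 0 = b 1 := by
          rw [hc', Module.Basis.reindex_apply]
          simp
        have hc'1 : c' 1 = b 0 := by
          rw [hc', Module.Basis.reindex_apply]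
          simp
        have h0 : ((Psi b (mkE' (ZMod n) 1)).1 : V ≃ₗ[ZMod n] V) (c' 0) = c' 0 := by
          rw [hc'0, t'_apply_b1]
        have h1 : ((Psi b (mkE' (ZMod n) 1)).1 : V ≃ₗ[ZMod n] V) (c' 1) = c' 0 + c' 1 := by
          rw [hc'1, hc'0, t'_apply_b0, add_comm]
        have hdet : LinearEquiv.det ((Psi b (mkE' (ZMod n) 1)).1 : V ≃ₗ[ZMod n] V) = 1 :=
          (Psi b (mkE' (ZMod n) 1)).2
        have hp := hprop c' (Psi b (mkE' (ZMod n) 1)).1 hdet h0 h1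
        exact ⟨wedge (ZMod n) (c' 0) (c' 1), hp.symm ▸ rfl⟩
    | one =>
      rw [map_one, map_one, ofMul_one]
      exact zero_mem _
    | mul x y hx hy ihx ihy =>
      rw [_root_.map_mul, _root_.map_mul, ofMul_mul]
      exact add_mem ihx ihy
    | inv x hx ihx =>
      rw [map_inv, map_inv, ofMul_inv]
      exact neg_mem ihx
  have hsurj : Function.Surjective φ := by
    intro y
    have hz : ∀ z : Abelianization (SLmod (ZMod n) V), Additive.ofMul z ∈ φ.range := by
      intro z
      obtain ⟨g, rfl⟩ : ∃ g, Abelianization.of g = z :=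
        QuotientGroup.mk'_surjective _ z
      exact hofmem g
    obtain ⟨x, hx⟩ := hz (Additive.toMul y)
    exact ⟨x, hx⟩
  refine ⟨φ, ⟨hsurj, hprop⟩, ?_⟩
  rintro φ' ⟨hsurj', hprop'⟩
  have hw : φ (wedge (ZMod n) (b 0) (b 1)) = a := by
    rw [hφ, Th_wedge, det_b_self, hψ, ZMod.val_one, one_smul]
  have hw' : φ' (wedge (ZMod n) (b 0) (b 1)) = a := by
    have h0 := t_apply_b0 b
    have h1 := t_apply_b1 b
    have hdet : LinearEquiv.det ((Psi b (mkE (ZMod n) 1)).1 : V ≃ₗ[ZMod n] V) = 1 :=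
      (Psi b (mkE (ZMod n) 1)).2
    rw [hprop' b (Psi b (mkE (ZMod n) 1)).1 hdet h0 h1, ha]
  ext x
  have hsm : x = (Th b x.1).val • wedge (ZMod n) (b 0) (b 1) := by
    conv_lhs => rw [eq_smul_wedge b x]
    rw [← Nat.cast_smul_eq_nsmul (ZMod n), ZMod.natCast_rightInverse _]
  rw [hsm, AddMonoidHom.map_nsmul, AddMonoidHom.map_nsmul, hw, hw']
end

section
/- Let α be an element of a field K of characteristic ≠ 2,3 with α³ ≠ 27, and let x₁, x₂, x₃ be the roots (in an algebraic closure) of X³ + (α²/3)X² + αX + 1 = 0. Then the polynomial identity T³ − (α³ − 27) = ∏_{1≤i<j≤3} (T − α + 3·x_i·x_j) holds. -/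
/-!
Put `yᵢⱼ = β - 3xᵢxⱼ`. Vieta's formulas for the roots `xᵢ` (`e₁ = -β²/3`, `e₂ = β`, `e₃ = -1`)
give `∑ yᵢⱼ = 0`, `∑ yᵢⱼ yₖₗ = 0` and `∏ yᵢⱼ = β³ - 27`, so `∏ (T - yᵢⱼ) = T³ - (β³ - 27)`.
-/

open Polynomial

section
variable {R : Type*} [CommRing R]

theorem Cubic.vieta_of_toPoly_eq_prod {p q r x₁ x₂ x₃ : R}
    (h : Cubic.toPoly ⟨1, p, q, r⟩ = (X - C x₁) * (X - C x₂) * (X - C x₃)) :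
    p = -(x₁ + x₂ + x₃) ∧ q = x₁ * x₂ + x₁ * x₃ + x₂ * x₃ ∧ r = -(x₁ * x₂ * x₃) := by
  rw [Cubic.prod_X_sub_C_eq, Cubic.toPoly_injective] at h
  injection h with _ hp hq hr
  exact ⟨hp, hq, hr⟩

theorem prod_X_sub_C_eq_X_pow_three_sub_C {y₁ y₂ y₃ : R} (hs₁ : y₁ + y₂ + y₃ = 0)
    (hs₂ : y₁ * y₂ + y₁ * y₃ + y₂ * y₃ = 0) :
    (X - C y₁) * (X - C y₂) * (X - C y₃) = X ^ 3 - C (y₁ * y₂ * y₃) := by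
  rw [Cubic.prod_X_sub_C_eq, hs₁, hs₂]
  simp [Cubic.toPoly, sub_eq_add_neg]

theorem prod_X_sub_C_add_three_mul_eq {β x₁ x₂ x₃ : R}
    (he₁ : 3 * (x₁ + x₂ + x₃) = -β ^ 2) (he₂ : x₁ * x₂ + x₁ * x₃ + x₂ * x₃ = β)
    (he₃ : x₁ * x₂ * x₃ = -1) :
    (X - C β + C (3 * x₁ * x₂)) * (X - C β + C (3 * x₁ * x₃)) * (X - C β + C (3 * x₂ * x₃)) =
      X ^ 3 - C (β ^ 3 - 27) := by
  have hfactor : ∀ z, X - C β + C z = X - C (β - z) := fun z => by rw [C_sub]; ring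
  simp only [hfactor]
  rw [prod_X_sub_C_eq_X_pow_three_sub_C (by linear_combination -3 * he₂)
    (by linear_combination 3 * (x₁ * x₂ * x₃) * he₁ - 3 * β ^ 2 * he₃ - 6 * β * he₂)]
  congr 2
  linear_combination (-27 * (x₁ * x₂ * x₃) + 27 - 3 * β ^ 3) * he₃
    + 3 * β * (x₁ * x₂ * x₃) * he₁ - 3 * β ^ 2 * he₂

end

theorem stmt_15_general (K : Type*) [Field K] (h3 : (3 : K) ≠ 0)
    (x₁ x₂ x₃ : AlgebraicClosure K)
    (β : AlgebraicClosure K)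
    (hroots : (X ^ 3 + C (β ^ 2 / 3) * X ^ 2 + C β * X + 1 : Polynomial (AlgebraicClosure K)) =
      (X - C x₁) * (X - C x₂) * (X - C x₃)) :
    (X ^ 3 - C (β ^ 3 - 27) : Polynomial (AlgebraicClosure K)) =
      (X - C β + C (3 * x₁ * x₂)) * (X - C β + C (3 * x₁ * x₃)) * (X - C β + C (3 * x₂ * x₃)) := by
  have h3' : (3 : AlgebraicClosure K) ≠ 0 := by
    rwa [← map_ofNat (algebraMap K (AlgebraicClosure K)) 3, _root_.map_ne_zero]
  rw [show (X ^ 3 + C (β ^ 2 / 3) * X ^ 2 + C β * X + 1 : Polynomial (AlgebraicClosure K)) =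
      Cubic.toPoly ⟨1, β ^ 2 / 3, β, 1⟩ by simp [Cubic.toPoly]] at hroots
  obtain ⟨he₁, he₂, he₃⟩ := Cubic.vieta_of_toPoly_eq_prod hroots
  refine (prod_X_sub_C_add_three_mul_eq ?_ he₂.symm (by linear_combination he₃)).symm
  linear_combination (div_eq_iff h3').mp he₁

/-- Let `α` be an element of a field `K` of characteristic `≠ 2, 3` with `α³ ≠ 27`, and let
`x₁, x₂, x₃` be the roots (in an algebraic closure) of `X³ + (α²/3)X² + αX + 1 = 0`.
Then the polynomial identity
`T³ − (α³ − 27) = ∏_{1 ≤ i < j ≤ 3} (T − α + 3xᵢxⱼ)` holds. -/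
theorem stmt_15 (K : Type*) [Field K] (h2 : (2 : K) ≠ 0) (h3 : (3 : K) ≠ 0)
    (α : K) (hα : α ^ 3 ≠ 27) (x₁ x₂ x₃ : AlgebraicClosure K)
    (β : AlgebraicClosure K) (hβ : β = algebraMap K (AlgebraicClosure K) α)
    (hroots : (X ^ 3 + C (β ^ 2 / 3) * X ^ 2 + C β * X + 1 : Polynomial (AlgebraicClosure K)) =
      (X - C x₁) * (X - C x₂) * (X - C x₃)) :
    (X ^ 3 - C (β ^ 3 - 27) : Polynomial (AlgebraicClosure K)) =
      (X - C β + C (3 * x₁ * x₂)) * (X - C β + C (3 * x₁ * x₃)) * (X - C β + C (3 * x₂ * x₃)) :=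
  stmt_15_general K h3 x₁ x₂ x₃ β hroots
end

section
/- Let E: y² = x³ + a₂x² + a₄x + a₆ over a field of characteristic ≠ 2, A a point of order 2, and P, P' points with 2P = 2P' = A and P ≠ ±P'. Then x_P + x_{P'} = 2·x_A. -/
/-!
A point of order 2 on `y² = f(x)` is `A = (x₀, 0)` with `f(x₀) = 0`. Clearing denominators in the
duplication formula `x(2P) = (f'(x)/2y)² - a₂ - 2x` and using `y² = f(x)`, `f(x₀) = 0`, the
condition `x(2P) = x₀` becomes `q(x)² = 0` for the quadratic
`q(x) = x² - 2x₀x - (2x₀² + 2a₂x₀ + a₄)`. Since `P ≠ ±P'`, the halves `P` and `P'` have distinct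
`x`-coordinates, so these are the two roots of `q` and sum to `2x₀`.
-/

lemma add_eq_of_sq_sub_mul_eq_of_ne {R : Type*} [CommRing R] [IsDomain R] {a b s c : R}
    (hab : a ≠ b) (ha : a ^ 2 - s * a = c) (hb : b ^ 2 - s * b = c) : a + b = s :=
  mul_left_cancel₀ (sub_ne_zero.2 hab) (by linear_combination ha - hb)

namespace WeierstrassCurve.Affine

variable {F : Type*} [Field F] {W : Affine F}

lemma X_ne_of_some_ne_of_some_ne_neg {x₁ x₂ y₁ y₂ : F} {h₁ : W.Nonsingular x₁ y₁}
    {h₂ : W.Nonsingular x₂ y₂} (hne : Point.some _ _ h₁ ≠ Point.some _ _ h₂)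
    (hne' : Point.some _ _ h₁ ≠ -Point.some _ _ h₂) : x₁ ≠ x₂ := by
  rintro rfl
  rcases Y_eq_of_X_eq h₁.1 h₂.1 rfl with rfl | rfl
  · exact hne rfl
  · exact hne' (Point.neg_some h₂).symm

lemma Point.two_smul_some_eq_zero_iff [DecidableEq F] {x y : F} (h : W.Nonsingular x y) :
    (2 : ℕ) • Point.some _ _ h = 0 ↔ y = W.negY x y := by
  refine ⟨fun h2 => ?_, fun hy => by rw [two_smul, Point.add_self_of_Y_eq hy]⟩
  by_contra hy
  rw [two_smul, Point.add_self_of_Y_ne hy] at h2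
  exact Point.some_ne_zero _ h2

lemma Point.Y_ne_negY_and_X_eq_addX_of_two_smul_eq_some [DecidableEq F] {x y x' y' : F}
    {h : W.Nonsingular x y} {h' : W.Nonsingular x' y'}
    (h2 : (2 : ℕ) • Point.some _ _ h = Point.some _ _ h') :
    y ≠ W.negY x y ∧ x' = W.addX x x (W.slope x x y y) := by
  have hy : y ≠ W.negY x y := fun hy => Point.some_ne_zero h' <| by
    rw [← h2, (Point.two_smul_some_eq_zero_iff h).2 hy]
  rw [two_smul, Point.add_self_of_Y_ne hy] at h2
  exact ⟨hy, ((Point.some.inj h2).1).symm⟩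

variable [W.IsCharNeTwoNF]

lemma negY_of_isCharNeTwoNF (x y : F) : W.negY x y = -y := by
  simp [a₁_of_isCharNeTwoNF, a₃_of_isCharNeTwoNF]

lemma equation_iff_of_isCharNeTwoNF (x y : F) :
    W.Equation x y ↔ y ^ 2 = x ^ 3 + W.a₂ * x ^ 2 + W.a₄ * x + W.a₆ := by
  simp [equation_iff, a₁_of_isCharNeTwoNF, a₃_of_isCharNeTwoNF]

lemma eq_negY_iff_of_isCharNeTwoNF (h2 : (2 : F) ≠ 0) (x y : F) : y = W.negY x y ↔ y = 0 := by
  rw [negY_of_isCharNeTwoNF, eq_neg_iff_add_eq_zero, ← two_mul, mul_eq_zero, or_iff_right h2]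

lemma Point.Y_eq_zero_of_two_smul_eq_zero [DecidableEq F] (h2 : (2 : F) ≠ 0) {x y : F}
    {h : W.Nonsingular x y} (h2P : (2 : ℕ) • Point.some _ _ h = 0) : y = 0 :=
  (eq_negY_iff_of_isCharNeTwoNF h2 x y).1 ((Point.two_smul_some_eq_zero_iff h).1 h2P)

/-- The duplication formula `x(2P) = λ² - a₂ - 2x` with `λ = f'(x) / 2y`, cleared of denominators. -/
lemma Point.two_smul_some_X_mul_eq [DecidableEq F] (h2 : (2 : F) ≠ 0) {x y x' y' : F}
    {h : W.Nonsingular x y} {h' : W.Nonsingular x' y'}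
    (h2P : (2 : ℕ) • Point.some _ _ h = Point.some _ _ h') :
    (x' + W.a₂ + 2 * x) * (2 * y) ^ 2 = (3 * x ^ 2 + 2 * W.a₂ * x + W.a₄) ^ 2 := by
  obtain ⟨hy, rfl⟩ := Point.Y_ne_negY_and_X_eq_addX_of_two_smul_eq_some h2P
  have hy0 : 2 * y ≠ 0 := by
    rw [Ne, eq_negY_iff_of_isCharNeTwoNF h2] at hy
    exact mul_ne_zero h2 hy
  have hslope : W.slope x x y y * (2 * y) = 3 * x ^ 2 + 2 * W.a₂ * x + W.a₄ := by
    rw [slope_of_Y_ne rfl hy, negY_of_isCharNeTwoNF, a₁_of_isCharNeTwoNF, sub_neg_eq_add,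
      ← two_mul, zero_mul, sub_zero, div_mul_cancel₀ _ hy0]
  rw [addX, a₁_of_isCharNeTwoNF, ← hslope]
  ring

-- With `f` the cubic and `q` the quadratic below, `4 (x₀ + a₂ + 2x) f(x) - f'(x)² + q(x)²` is a
-- multiple of `f(x₀)`.
lemma Point.X_sq_sub_two_mul_X_of_two_smul_eq_some [DecidableEq F] (h2 : (2 : F) ≠ 0)
    {x y x₀ : F}
    {h : W.Nonsingular x y} {h₀ : W.Nonsingular x₀ 0}
    (h2P : (2 : ℕ) • Point.some _ _ h = Point.some _ _ h₀) :
    x ^ 2 - 2 * x₀ * x = 2 * x₀ ^ 2 + 2 * W.a₂ * x₀ + W.a₄ := by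
  have hdouble := Point.two_smul_some_X_mul_eq h2 h2P
  have hx := (equation_iff_of_isCharNeTwoNF x y).1 h.1
  have hx₀ := (equation_iff_of_isCharNeTwoNF x₀ 0).1 h₀.1
  have hq : (x ^ 2 - 2 * x₀ * x - (2 * x₀ ^ 2 + 2 * W.a₂ * x₀ + W.a₄)) ^ 2 = 0 := by
    linear_combination -hdouble + 4 * (x₀ + W.a₂ + 2 * x) * hx - 4 * (x₀ + W.a₂ + 2 * x) * hx₀
  exact sub_eq_zero.1 (pow_eq_zero_iff two_ne_zero |>.1 hq)

end WeierstrassCurve.Affine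

open WeierstrassCurve.Affine

open Classical in
theorem stmt_18_general (K : Type*) [Field K] (h2 : (2 : K) ≠ 0) (a₂ a₄ a₆ : K)
    (W : WeierstrassCurve K)
    (hW : W = { a₁ := 0, a₂ := a₂, a₃ := 0, a₄ := a₄, a₆ := a₆ })
    (xA yA xP yP xP' yP' : K)
    (hA : W.toAffine.Nonsingular xA yA) (hP : W.toAffine.Nonsingular xP yP)
    (hP' : W.toAffine.Nonsingular xP' yP')
    (hA2 : (2 : ℕ) • (Point.some _ _ hA) = 0)
    (h2P : (2 : ℕ) • (Point.some _ _ hP) = Point.some _ _ hA)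
    (h2P' : (2 : ℕ) • (Point.some _ _ hP') = Point.some _ _ hA)
    (hne : Point.some _ _ hP ≠ Point.some _ _ hP')
    (hne' : Point.some _ _ hP ≠ -Point.some _ _ hP') :
    xP + xP' = 2 * xA := by
  have : W.IsCharNeTwoNF := by subst hW; exact ⟨rfl, rfl⟩
  obtain rfl := Point.Y_eq_zero_of_two_smul_eq_zero h2 hA2
  exact add_eq_of_sq_sub_mul_eq_of_ne (X_ne_of_some_ne_of_some_ne_neg hne hne')
    (Point.X_sq_sub_two_mul_X_of_two_smul_eq_some h2 h2P)
    (Point.X_sq_sub_two_mul_X_of_two_smul_eq_some h2 h2P')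

open Classical in
/-- Let `E : y² = x³ + a₂x² + a₄x + a₆` over a field of characteristic `≠ 2`, `A` a point of
order 2, and `P, P'` points with `2P = 2P' = A` and `P ≠ ±P'`. Then `x_P + x_{P'} = 2x_A`. -/
theorem stmt_18 (K : Type*) [Field K] (h2 : (2 : K) ≠ 0) (a₂ a₄ a₆ : K)
    (W : WeierstrassCurve K)
    (hW : W = { a₁ := 0, a₂ := a₂, a₃ := 0, a₄ := a₄, a₆ := a₆ })
    (hΔ : W.Δ ≠ 0)
    (xA yA xP yP xP' yP' : K)
    (hA : W.toAffine.Nonsingular xA yA) (hP : W.toAffine.Nonsingular xP yP)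
    (hP' : W.toAffine.Nonsingular xP' yP')
    (hA2 : (2 : ℕ) • (Point.some _ _ hA) = 0) (hA0 : Point.some _ _ hA ≠ 0)
    (h2P : (2 : ℕ) • (Point.some _ _ hP) = Point.some _ _ hA)
    (h2P' : (2 : ℕ) • (Point.some _ _ hP') = Point.some _ _ hA)
    (hne : Point.some _ _ hP ≠ Point.some _ _ hP')
    (hne' : Point.some _ _ hP ≠ -Point.some _ _ hP') :
    xP + xP' = 2 * xA :=
  stmt_18_general K h2 a₂ a₄ a₆ W hW xA yA xP yP xP' yP' hA hP hP' hA2 h2P h2P' hne hne'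
end

section
/- Let E: y² = (x − x_A)(x − x_B)(x − x_C) be an elliptic curve over a field of characteristic ≠ 2, with A, B, C its points of order 2, and let Δ = 16(x_A−x_B)²(x_B−x_C)²(x_C−x_A)² be its discriminant. Let P, Q, R be points with {2P, 2Q, 2R} = {A, B, C}, and set P' = P + 2Q, Q' = Q + 2R, R' = R + 2P. Then w := 2·((y_P−y_{P'})/(x_P−x_{P'}))·((y_Q−y_{Q'})/(x_Q−x_{Q'}))·((y_R−y_{R'})/(x_R−x_{R'})) satisfies w² = 4(x_{2P}−x_{2Q})(x_{2Q}−x_{2R})(x_{2R}−x_{2P}), which is a square root of Δ. -/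
open WeierstrassCurve.Affine
open Classical

private lemma core_factor {K : Type*} [Field K] (p q r x y L M u v : K)
    (e : y ^ 2 = (x - p) * (x - q) * (x - r))
    (hL : 2 * y * L = 3 * x ^ 2 + 2 * (-(p + q + r)) * x + (p * q + q * r + r * p))
    (hp : p = L ^ 2 - (-(p + q + r)) - 2 * x)
    (hq : M * (x - q) = y)
    (hx' : u = M ^ 2 - (-(p + q + r)) - x - q)
    (hy' : v = -(M * (u - x) + y))
    (hxq : x ≠ q) (hxu : x ≠ u) :
    ((y - v) / (x - u)) ^ 2 = p - q := by
  have hxq0 : x - q ≠ 0 := sub_ne_zero.2 hxq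
  have hxu0 : x - u ≠ 0 := sub_ne_zero.2 hxu
  have hQ1sq : ((x - p) ^ 2 - (p - q) * (p - r)) ^ 2 = 0 := by
    linear_combination (4 * L ^ 2) * e
      + (-((3 * x ^ 2 + 2 * (-(p + q + r)) * x + (p * q + q * r + r * p)) + 2 * y * L)) * hL
      + (-4 * ((x - p) * (x - q) * (x - r))) * hp
  have hQ1 : (x - p) ^ 2 - (p - q) * (p - r) = 0 :=
    (pow_eq_zero_iff (two_ne_zero)).mp hQ1sq
  have hA' : ((x - u) * (x - q)) * (x - q) = ((x - q) ^ 2 - (q - p) * (q - r)) * (x - q) := by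
    linear_combination (-(x - q) ^ 2) * hx' + (-(M * (x - q) + y)) * hq + (-1 : K) * e
  have hA : (x - u) * (x - q) = (x - q) ^ 2 - (q - p) * (q - r) := mul_right_cancel₀ hxq0 hA'
  have hB : (y - v) * (x - q) = y * (2 * (x - q) - (x - u)) := by
    linear_combination (u - x) * hq + (-(x - q)) * hy'
  have hE : (2 * (x - q) - (x - u)) * (x - q) = (x - q) ^ 2 + (q - p) * (q - r) := by
    linear_combination -hA
  have key : y ^ 2 * ((x - q) ^ 2 + (q - p) * (q - r)) ^ 2
      = (p - q) * (x - q) ^ 2 * ((x - q) ^ 2 - (q - p) * (q - r)) ^ 2 := by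
    linear_combination (((x - q) ^ 2 + (q - p) * (q - r)) ^ 2) * e
      + ((1:K)*x^5 + (-1)*r*x^4 + (-4)*q*x^4 + (4)*q*r*x^3 + (1)*q*r^2*x^2 + (6)*q^2*x^3
        + (-8)*q^2*r*x^2 + (-1)*q^2*r^2*x + (-3)*q^3*x^2 + (6)*q^3*r*x + (-1)*q^4*r
        + (-1)*p*r^2*x^2 + (2)*p*q*r*x^2 + (-1)*p*q^2*x^2 + (1)*p*q^2*r^2 + (-2)*p*q^3*r
        + (1)*p*q^4 + (1)*p^2*r^2*x + (-2)*p^2*q*r*x + (-1)*p^2*q*r^2 + (1)*p^2*q^2*x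
        + (2)*p^2*q^2*r + (-1)*p^2*q^3) * hQ1
  have G6 : (y - v) ^ 2 * (x - q) ^ 4 = ((p - q) * (x - u) ^ 2) * (x - q) ^ 4 := by
    linear_combination (((y - v) * (x - q) + y * (2 * (x - q) - (x - u))) * (x - q) ^ 2) * hB
      + (y ^ 2 * ((2 * (x - q) - (x - u)) * (x - q) + ((x - q) ^ 2 + (q - p) * (q - r)))) * hE
      + key
      + (-(p - q) * (x - q) ^ 2 * (((x - q) ^ 2 - (q - p) * (q - r)) + (x - u) * (x - q))) * hA
  have hfin : (y - v) ^ 2 = (p - q) * (x - u) ^ 2 :=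
    mul_right_cancel₀ (pow_ne_zero 4 hxq0) G6
  rw [div_pow, div_eq_iff (pow_ne_zero 2 hxu0)]
  linear_combination hfin

private lemma factor_main {K : Type*} [Field K] (h2 : (2 : K) ≠ 0) {W : WeierstrassCurve K}
    (hW1 : W.a₁ = 0) (hW3 : W.a₃ = 0)
    {x y xT yT xS yS x' y' : K} (xr : K)
    (hP : W.toAffine.Nonsingular x y) (hT : W.toAffine.Nonsingular xT yT)
    (hS : W.toAffine.Nonsingular xS yS) (hP' : W.toAffine.Nonsingular x' y')
    (ha2 : W.a₂ = -(xS + xT + xr)) (ha4 : W.a₄ = xS * xT + xT * xr + xr * xS)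
    (ha6 : W.a₆ = -(xS * xT * xr))
    (hyT : yT = 0) (hyS : yS = 0) (hST : xS ≠ xT)
    (hdbl : (2 : ℕ) • (Point.some _ _ hP) = Point.some _ _ hS)
    (hadd : Point.some _ _ hP' = Point.some _ _ hP + Point.some _ _ hT) :
    ((y - y') / (x - x')) ^ 2 = xS - xT := by
  -- curve equations
  have eP : y ^ 2 = (x - xS) * (x - xT) * (x - xr) := by
    have h := (W.toAffine.equation_iff x y).1 hP.1
    rw [hW1, hW3, ha2, ha4, ha6] at h
    linear_combination h
  have eP' : y' ^ 2 = (x' - xS) * (x' - xT) * (x' - xr) := by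
    have h := (W.toAffine.equation_iff x' y').1 hP'.1
    rw [hW1, hW3, ha2, ha4, ha6] at h
    linear_combination h
  -- y ≠ 0
  have hy0 : y ≠ 0 := by
    intro h0
    have hyeg : y = W.toAffine.negY x y := by rw [negY, hW1, hW3, h0]; ring
    rw [two_nsmul, Point.add_self_of_Y_eq hyeg] at hdbl
    exact Point.some_ne_zero hS hdbl.symm
  have hyne : y ≠ W.toAffine.negY x y := by
    rw [negY, hW1, hW3]
    intro h
    have h2y : 2 * y = 0 := by linear_combination h
    exact hy0 ((mul_eq_zero.1 h2y).resolve_left h2)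
  -- doubling coordinates
  have hdbl' := hdbl
  have hadd' := hadd
  rw [two_nsmul, Point.add_self_of_Y_ne hyne] at hdbl
  obtain ⟨hx2, hy2⟩ := Point.some.inj hdbl
  have hden : y - W.toAffine.negY x y ≠ 0 := sub_ne_zero.2 hyne
  have hL : 2 * y * (W.toAffine.slope x x y y)
      = 3 * x ^ 2 + 2 * (-(xS + xT + xr)) * x + (xS * xT + xT * xr + xr * xS) := by
    have hsl := slope_of_Y_ne (rfl : x = x) hyne
    rw [eq_div_iff hden] at hsl
    rw [negY, hW1, hW3] at hsl
    rw [← ha2, ← ha4]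
    linear_combination hsl
  have hp : xS = (W.toAffine.slope x x y y) ^ 2 - (-(xS + xT + xr)) - 2 * x := by
    rw [addX, hW1, ha2] at hx2
    linear_combination -hx2
  -- x ≠ xT
  have hxT : x ≠ xT := by
    intro h
    apply hy0
    rw [h] at eP
    have hsq : y ^ 2 = 0 := by linear_combination eP
    exact (pow_eq_zero_iff (two_ne_zero)).mp hsq
  -- addition coordinates
  rw [Point.add_of_X_ne hxT] at hadd
  obtain ⟨hx'', hy''⟩ := Point.some.inj hadd
  have hq : (W.toAffine.slope x xT y yT) * (x - xT) = y := by
    rw [slope_of_X_ne hxT, hyT, sub_zero, div_mul_cancel₀ _ (sub_ne_zero.2 hxT)]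
  have hx' : x' = (W.toAffine.slope x xT y yT) ^ 2 - (-(xS + xT + xr)) - x - xT := by
    rw [hx'', addX, hW1, ha2]; ring
  have hy' : y' = -((W.toAffine.slope x xT y yT) * (x' - x) + y) := by
    rw [hy'', WeierstrassCurve.Affine.addY, negAddY, negY, hW1, hW3, ← hx'']
    ring
  -- x ≠ x'
  have hxx' : x ≠ x' := by
    intro hxe
    rcases Y_eq_of_X_eq hP'.1 hP.1 hxe.symm with h | h
    · have hPP : Point.some _ _ hP' = Point.some _ _ hP := by subst hxe; subst h; rfl
      rw [hPP] at hadd'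
      exact Point.some_ne_zero hT (left_eq_add.mp hadd')
    · have hPP : Point.some _ _ hP' = -Point.some _ _ hP := by
        rw [Point.neg_some]
        subst hxe; subst h; rfl
      rw [hPP] at hadd'
      have h4 : Point.some _ _ hT = -Point.some _ _ hP - Point.some _ _ hP := by
        have h5 := hadd'.symm
        rw [add_comm] at h5
        rwa [← eq_sub_iff_add_eq] at h5
      have h5 : Point.some _ _ hT = -((2 : ℕ) • Point.some _ _ hP) := by rw [h4, two_nsmul]; abel
      rw [hdbl', Point.neg_some] at h5
      obtain ⟨hTS, -⟩ := Point.some.inj h5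
      exact hST hTS.symm
  exact core_factor xS xT xr x y _ _ x' y' eP hL hp hq hx' hy' hxT hxx'

/-- Let `E : y² = (x − x_A)(x − x_B)(x − x_C)` be an elliptic curve over a field of
characteristic `≠ 2`, with `A, B, C` its points of order 2. Let `P, Q, R` be points with
`{2P, 2Q, 2R} = {A, B, C}`, and set `P' = P + 2Q`, `Q' = Q + 2R`, `R' = R + 2P`. Then
`w := 2·((y_P−y_{P'})/(x_P−x_{P'}))·((y_Q−y_{Q'})/(x_Q−x_{Q'}))·((y_R−y_{R'})/(x_R−x_{R'}))`
satisfies `w² = 4(x_{2P}−x_{2Q})(x_{2Q}−x_{2R})(x_{2R}−x_{2P})` (a square root of `Δ`) and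
`w⁴ = Δ`, where `Δ = 16(x_A−x_B)²(x_B−x_C)²(x_C−x_A)²`. -/
theorem stmt_19 (K : Type*) [Field K] (h2 : (2 : K) ≠ 0) (xA xB xC : K)
    (hAB : xA ≠ xB) (hBC : xB ≠ xC) (hCA : xC ≠ xA)
    (W : WeierstrassCurve K)
    (hW : W = { a₁ := 0, a₂ := -(xA + xB + xC), a₃ := 0,
                a₄ := xA * xB + xB * xC + xC * xA, a₆ := -(xA * xB * xC) })
    (hA : W.toAffine.Nonsingular xA 0) (hB : W.toAffine.Nonsingular xB 0)
    (hC : W.toAffine.Nonsingular xC 0)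
    (xP yP xQ yQ xR yR xP' yP' xQ' yQ' xR' yR' : K)
    (x2P y2P x2Q y2Q x2R y2R : K)
    (hP : W.toAffine.Nonsingular xP yP) (hQ : W.toAffine.Nonsingular xQ yQ)
    (hR : W.toAffine.Nonsingular xR yR)
    (hP' : W.toAffine.Nonsingular xP' yP') (hQ' : W.toAffine.Nonsingular xQ' yQ')
    (hR' : W.toAffine.Nonsingular xR' yR')
    (h2P : W.toAffine.Nonsingular x2P y2P) (h2Q : W.toAffine.Nonsingular x2Q y2Q)
    (h2R : W.toAffine.Nonsingular x2R y2R)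
    (hd2P : (2 : ℕ) • (Point.some _ _ hP) = Point.some _ _ h2P)
    (hd2Q : (2 : ℕ) • (Point.some _ _ hQ) = Point.some _ _ h2Q)
    (hd2R : (2 : ℕ) • (Point.some _ _ hR) = Point.some _ _ h2R)
    (hset : ({Point.some _ _ h2P, Point.some _ _ h2Q, Point.some _ _ h2R} : Set W.toAffine.Point) =
      {Point.some _ _ hA, Point.some _ _ hB, Point.some _ _ hC})
    (hPdef : Point.some _ _ hP' = Point.some _ _ hP + (2 : ℕ) • (Point.some _ _ hQ))
    (hQdef : Point.some _ _ hQ' = Point.some _ _ hQ + (2 : ℕ) • (Point.some _ _ hR))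
    (hRdef : Point.some _ _ hR' = Point.some _ _ hR + (2 : ℕ) • (Point.some _ _ hP)) :
    letI w : K := 2 * ((yP - yP') / (xP - xP')) * ((yQ - yQ') / (xQ - xQ')) *
      ((yR - yR') / (xR - xR'))
    w ^ 2 = 4 * (x2P - x2Q) * (x2Q - x2R) * (x2R - x2P) ∧
    w ^ 4 = 16 * (xA - xB) ^ 2 * (xB - xC) ^ 2 * (xC - xA) ^ 2 := by
  have hW1 : W.a₁ = 0 := by rw [hW]
  have hW3 : W.a₃ = 0 := by rw [hW]
  have hA2 : W.a₂ = -(xA + xB + xC) := by rw [hW]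
  have hA4 : W.a₄ = xA * xB + xB * xC + xC * xA := by rw [hW]
  have hA6 : W.a₆ = -(xA * xB * xC) := by rw [hW]
  -- memberships
  have m2P : Point.some _ _ h2P = Point.some _ _ hA ∨ Point.some _ _ h2P = Point.some _ _ hB ∨
      Point.some _ _ h2P = Point.some _ _ hC := by
    have h : Point.some _ _ h2P ∈ ({Point.some _ _ hA, Point.some _ _ hB, Point.some _ _ hC} :
        Set W.toAffine.Point) := by rw [← hset]; simp
    simpa using h
  have m2Q : Point.some _ _ h2Q = Point.some _ _ hA ∨ Point.some _ _ h2Q = Point.some _ _ hB ∨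
      Point.some _ _ h2Q = Point.some _ _ hC := by
    have h : Point.some _ _ h2Q ∈ ({Point.some _ _ hA, Point.some _ _ hB, Point.some _ _ hC} :
        Set W.toAffine.Point) := by rw [← hset]; simp
    simpa using h
  have m2R : Point.some _ _ h2R = Point.some _ _ hA ∨ Point.some _ _ h2R = Point.some _ _ hB ∨
      Point.some _ _ h2R = Point.some _ _ hC := by
    have h : Point.some _ _ h2R ∈ ({Point.some _ _ hA, Point.some _ _ hB, Point.some _ _ hC} :
        Set W.toAffine.Point) := by rw [← hset]; simp
    simpa using h
  have mA : Point.some _ _ hA = Point.some _ _ h2P ∨ Point.some _ _ hA = Point.some _ _ h2Q ∨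
      Point.some _ _ hA = Point.some _ _ h2R := by
    have h : Point.some _ _ hA ∈ ({Point.some _ _ h2P, Point.some _ _ h2Q, Point.some _ _ h2R} :
        Set W.toAffine.Point) := by rw [hset]; simp
    simpa using h
  have mB : Point.some _ _ hB = Point.some _ _ h2P ∨ Point.some _ _ hB = Point.some _ _ h2Q ∨
      Point.some _ _ hB = Point.some _ _ h2R := by
    have h : Point.some _ _ hB ∈ ({Point.some _ _ h2P, Point.some _ _ h2Q, Point.some _ _ h2R} :
        Set W.toAffine.Point) := by rw [hset]; simp
    simpa using h
  have mC : Point.some _ _ hC = Point.some _ _ h2P ∨ Point.some _ _ hC = Point.some _ _ h2Q ∨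
      Point.some _ _ hC = Point.some _ _ h2R := by
    have h : Point.some _ _ hC ∈ ({Point.some _ _ h2P, Point.some _ _ h2Q, Point.some _ _ h2R} :
        Set W.toAffine.Point) := by rw [hset]; simp
    simpa using h
  -- y-coordinates vanish
  have hy2P : y2P = 0 := by rcases m2P with h | h | h <;> exact (Point.some.inj h).2
  have hy2Q : y2Q = 0 := by rcases m2Q with h | h | h <;> exact (Point.some.inj h).2
  have hy2R : y2R = 0 := by rcases m2R with h | h | h <;> exact (Point.some.inj h).2
  -- x-coordinate memberships
  have mA' : xA = x2P ∨ xA = x2Q ∨ xA = x2R := by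
    rcases mA with h | h | h
    · exact Or.inl (Point.some.inj h).1
    · exact Or.inr (Or.inl (Point.some.inj h).1)
    · exact Or.inr (Or.inr (Point.some.inj h).1)
  have mB' : xB = x2P ∨ xB = x2Q ∨ xB = x2R := by
    rcases mB with h | h | h
    · exact Or.inl (Point.some.inj h).1
    · exact Or.inr (Or.inl (Point.some.inj h).1)
    · exact Or.inr (Or.inr (Point.some.inj h).1)
  have mC' : xC = x2P ∨ xC = x2Q ∨ xC = x2R := by
    rcases mC with h | h | h
    · exact Or.inl (Point.some.inj h).1
    · exact Or.inr (Or.inl (Point.some.inj h).1)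
    · exact Or.inr (Or.inr (Point.some.inj h).1)
  have hperm : (xA = x2P ∧ xB = x2Q ∧ xC = x2R) ∨ (xA = x2P ∧ xB = x2R ∧ xC = x2Q) ∨
      (xA = x2Q ∧ xB = x2P ∧ xC = x2R) ∨ (xA = x2Q ∧ xB = x2R ∧ xC = x2P) ∨
      (xA = x2R ∧ xB = x2P ∧ xC = x2Q) ∨ (xA = x2R ∧ xB = x2Q ∧ xC = x2P) := by
    rcases mA' with a | a | a <;> rcases mB' with b | b | b <;> rcases mC' with c | c | c <;>
      first
        | exact absurd (a.trans b.symm) hAB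
        | exact absurd (b.trans c.symm) hBC
        | exact absurd (c.trans a.symm) hCA
        | exact Or.inl ⟨a, b, c⟩
        | exact Or.inr (Or.inl ⟨a, b, c⟩)
        | exact Or.inr (Or.inr (Or.inl ⟨a, b, c⟩))
        | exact Or.inr (Or.inr (Or.inr (Or.inl ⟨a, b, c⟩)))
        | exact Or.inr (Or.inr (Or.inr (Or.inr (Or.inl ⟨a, b, c⟩))))
        | exact Or.inr (Or.inr (Or.inr (Or.inr (Or.inr ⟨a, b, c⟩))))
  -- symmetric functions
  have ha2 : W.a₂ = -(x2P + x2Q + x2R) := by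
    rw [hA2]
    rcases hperm with ⟨h1, h2, h3⟩ | ⟨h1, h2, h3⟩ | ⟨h1, h2, h3⟩ | ⟨h1, h2, h3⟩ |
      ⟨h1, h2, h3⟩ | ⟨h1, h2, h3⟩ <;> rw [h1, h2, h3] <;> ring
  have ha4 : W.a₄ = x2P * x2Q + x2Q * x2R + x2R * x2P := by
    rw [hA4]
    rcases hperm with ⟨h1, h2, h3⟩ | ⟨h1, h2, h3⟩ | ⟨h1, h2, h3⟩ | ⟨h1, h2, h3⟩ |
      ⟨h1, h2, h3⟩ | ⟨h1, h2, h3⟩ <;> rw [h1, h2, h3] <;> ring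
  have ha6 : W.a₆ = -(x2P * x2Q * x2R) := by
    rw [hA6]
    rcases hperm with ⟨h1, h2, h3⟩ | ⟨h1, h2, h3⟩ | ⟨h1, h2, h3⟩ | ⟨h1, h2, h3⟩ |
      ⟨h1, h2, h3⟩ | ⟨h1, h2, h3⟩ <;> rw [h1, h2, h3] <;> ring
  -- distinctness
  have hPQ : x2P ≠ x2Q := by
    rcases hperm with ⟨h1, h2, h3⟩ | ⟨h1, h2, h3⟩ | ⟨h1, h2, h3⟩ | ⟨h1, h2, h3⟩ |
      ⟨h1, h2, h3⟩ | ⟨h1, h2, h3⟩ <;> subst h1 <;> subst h2 <;> subst h3 <;>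
      first
        | exact hAB | exact hAB.symm | exact hBC | exact hBC.symm
        | exact hCA | exact hCA.symm
  have hQR : x2Q ≠ x2R := by
    rcases hperm with ⟨h1, h2, h3⟩ | ⟨h1, h2, h3⟩ | ⟨h1, h2, h3⟩ | ⟨h1, h2, h3⟩ |
      ⟨h1, h2, h3⟩ | ⟨h1, h2, h3⟩ <;> subst h1 <;> subst h2 <;> subst h3 <;>
      first
        | exact hAB | exact hAB.symm | exact hBC | exact hBC.symm
        | exact hCA | exact hCA.symm
  have hRP : x2R ≠ x2P := by
    rcases hperm with ⟨h1, h2, h3⟩ | ⟨h1, h2, h3⟩ | ⟨h1, h2, h3⟩ | ⟨h1, h2, h3⟩ |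
      ⟨h1, h2, h3⟩ | ⟨h1, h2, h3⟩ <;> subst h1 <;> subst h2 <;> subst h3 <;>
      first
        | exact hAB | exact hAB.symm | exact hBC | exact hBC.symm
        | exact hCA | exact hCA.symm
  -- the three factors
  rw [hd2Q] at hPdef
  rw [hd2R] at hQdef
  rw [hd2P] at hRdef
  have f1 : ((yP - yP') / (xP - xP')) ^ 2 = x2P - x2Q :=
    factor_main h2 hW1 hW3 x2R hP h2Q h2P hP' ha2 ha4 ha6 hy2Q hy2P hPQ hd2P hPdef
  have f2 : ((yQ - yQ') / (xQ - xQ')) ^ 2 = x2Q - x2R :=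
    factor_main h2 hW1 hW3 x2P hQ h2R h2Q hQ' (by rw [ha2]; ring) (by rw [ha4]; ring)
      (by rw [ha6]; ring) hy2R hy2Q hQR hd2Q hQdef
  have f3 : ((yR - yR') / (xR - xR')) ^ 2 = x2R - x2P :=
    factor_main h2 hW1 hW3 x2Q hR h2P h2R hR' (by rw [ha2]; ring) (by rw [ha4]; ring)
      (by rw [ha6]; ring) hy2P hy2R hRP hd2R hRdef
  refine ⟨?_, ?_⟩
  · calc (2 * ((yP - yP') / (xP - xP')) * ((yQ - yQ') / (xQ - xQ')) *
        ((yR - yR') / (xR - xR'))) ^ 2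
        = 4 * (((yP - yP') / (xP - xP')) ^ 2 * (((yQ - yQ') / (xQ - xQ')) ^ 2 *
          ((yR - yR') / (xR - xR')) ^ 2)) := by ring
      _ = 4 * (x2P - x2Q) * (x2Q - x2R) * (x2R - x2P) := by rw [f1, f2, f3]; ring
  · calc (2 * ((yP - yP') / (xP - xP')) * ((yQ - yQ') / (xQ - xQ')) *
        ((yR - yR') / (xR - xR'))) ^ 4
        = (4 * (((yP - yP') / (xP - xP')) ^ 2 * (((yQ - yQ') / (xQ - xQ')) ^ 2 *
          ((yR - yR') / (xR - xR')) ^ 2))) ^ 2 := by ring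
      _ = (4 * (x2P - x2Q) * (x2Q - x2R) * (x2R - x2P)) ^ 2 := by rw [f1, f2, f3]; ring
      _ = 16 * (xA - xB) ^ 2 * (xB - xC) ^ 2 * (xC - xA) ^ 2 := by
          rcases hperm with ⟨h1, h2, h3⟩ | ⟨h1, h2, h3⟩ | ⟨h1, h2, h3⟩ | ⟨h1, h2, h3⟩ |
            ⟨h1, h2, h3⟩ | ⟨h1, h2, h3⟩ <;> subst h1 <;> subst h2 <;> subst h3 <;> ring
end
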